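/- For f = a_2a_4r + a_2a_3r^2 + a_2^2r^3 + 2a_1a_4r^2 + a_1a_3r^3 − a_1a_2r^4 ∈ B[r], the identity d(f) = a_1^2·b holds in B[r_1,r_2], where b = r_1^4r_2 + 2r_1^3r_2^2 + 2r_1^2r_2^3 + r_1r_2^4. -/

import Mathlib

/-!
`Bbar = 𝔽_5[a_1,a_2,a_3,a_4]` (the variable `0,1,2,3 : Fin 4` are `a_1, a_2, a_3, a_4`),
`q(t) = t^5 + a_1t^4 + a_2t^3 + a_3t^2 + a_4t`, and `etaR : Bbar → Bbar[r]` is the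
𝔽_5-algebra map sending `a_i` to the coefficient of `x^{5-i}` in `q(x+r) - q(r)`,
computed in `Bbar[r][x]`.  This is the reduction modulo `(5, a_5)` of the
Gorbounov–Hopkins–Mahowald Hopf algebroid at the prime `5`.
-/

/-- The ring `B = 𝔽_5[a_1,a_2,a_3,a_4]`. -/
abbrev Bbar : Type := MvPolynomial (Fin 4) (ZMod 5)

/-- The generator `a_1`. -/
noncomputable def a1 : Bbar := MvPolynomial.X 0
/-- The generator `a_2`. -/
noncomputable def a2 : Bbar := MvPolynomial.X 1
/-- The generator `a_3`. -/
noncomputable def a3 : Bbar := MvPolynomial.X 2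
/-- The generator `a_4`. -/
noncomputable def a4 : Bbar := MvPolynomial.X 3

/-- The polynomial `q(t) = t^5 + a_1t^4 + a_2t^3 + a_3t^2 + a_4t` as an element of `B[t]`. -/
noncomputable def q : Polynomial Bbar :=
  Polynomial.X ^ 5 + Polynomial.C a1 * Polynomial.X ^ 4 + Polynomial.C a2 * Polynomial.X ^ 3 +
    Polynomial.C a3 * Polynomial.X ^ 2 + Polynomial.C a4 * Polynomial.X

/-- `q(x+r) - q(r)`, an element of `B[r][x]` (the inner variable is `r`, the outer is `x`). -/
noncomputable def qShift : Polynomial (Polynomial Bbar) :=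
  Polynomial.eval₂ (Polynomial.C.comp Polynomial.C)
      (Polynomial.X + Polynomial.C Polynomial.X) q -
    Polynomial.eval₂ (Polynomial.C.comp Polynomial.C) (Polynomial.C Polynomial.X) q

/-- The right unit `η_R : B → B[r]`, sending `a_i` (for `i = 1,2,3,4`) to the coefficient of
`x^{5-i}` in `q(x+r) - q(r)`. -/
noncomputable def etaR : Bbar →ₐ[ZMod 5] Polynomial Bbar :=
  MvPolynomial.aeval (fun k : Fin 4 => qShift.coeff (4 - k.1))

/-- The cobar differential: for `f = ∑_k c_k r^k`, `d(f) = ∑_k η_R(c_k)[r:=r_1]·r_2^k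
− f[r:=r_1+r_2] + f[r:=r_1]`, an element of `B[r_1][r_2]` (the inner variable is `r_1`,
the outer is `r_2`). -/
noncomputable def cobarD (f : Polynomial Bbar) : Polynomial (Polynomial Bbar) :=
  (∑ k ∈ Finset.range (f.natDegree + 1),
      Polynomial.C (etaR (f.coeff k)) * Polynomial.X ^ k) -
    Polynomial.eval₂ (Polynomial.C.comp Polynomial.C)
      (Polynomial.C Polynomial.X + Polynomial.X) f +
    Polynomial.C f

/-- The class `b = r_1^4r_2 + 2r_1^3r_2^2 + 2r_1^2r_2^3 + r_1r_2^4`, the mod-5 reduction of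
`((r_1+r_2)^5 − r_1^5 − r_2^5)/5`. -/
noncomputable def bclass : Polynomial (Polynomial Bbar) :=
  Polynomial.C (Polynomial.X ^ 4) * Polynomial.X +
    2 * Polynomial.C (Polynomial.X ^ 3) * Polynomial.X ^ 2 +
    2 * Polynomial.C (Polynomial.X ^ 2) * Polynomial.X ^ 3 +
    Polynomial.C Polynomial.X * Polynomial.X ^ 4

/-!
Mod 5, `q(x+r) - q(r)` has the binomial coefficients of `(x+r)^k - r^k` for `k ≤ 4` and none
from `(x+r)^5 - r^5 = x^5`; this gives `η_R` on generators. Since `d(f) = η_R(f) - f(r₁+r₂) + f(r₁)`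
is built from ring homomorphisms, `d(f) = a₁²b` is then an identity of polynomials over `𝔽₅`
in `a_i, r₁, r₂`.
-/

open Polynomial

-- Not found by instance search, but needed by `grind` to use the characteristic of this ring.
instance : IsLeftCancelAdd Bbar[X][X] :=
  ⟨fun a b c (h : a + b = a + c) => by rw [← neg_add_cancel_left a b, h, neg_add_cancel_left]⟩

lemma cobarD_eq_map_sub_aeval (f : Bbar[X]) :
    cobarD f = f.map (etaR : Bbar →+* Bbar[X]) - aeval (C X + X) f + C f := by
  rw [cobarD, map, eval₂_eq_sum_range (C.comp (etaR : Bbar →+* Bbar[X]))]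
  rfl

lemma qShift_eq : qShift =
    C (C a4 + 2 * C a3 * X + 3 * C a2 * X ^ 2 + 4 * C a1 * X ^ 3) * X +
    C (C a3 + 3 * C a2 * X + C a1 * X ^ 2) * X ^ 2 +
    C (C a2 + 4 * C a1 * X) * X ^ 3 + C (C a1) * X ^ 4 + X ^ 5 := by
  simp only [qShift, q, eval₂_add, eval₂_mul (S := Bbar[X][X]), eval₂_pow (S := Bbar[X][X]),
    eval₂_X, eval₂_C, RingHom.comp_apply, map_add, map_mul, map_pow, map_ofNat]
  grind

lemma etaR_X (i : Fin 4) : etaR (MvPolynomial.X i) = qShift.coeff (4 - i) :=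
  MvPolynomial.aeval_X _ i

lemma etaR_a1 : etaR a1 = C a1 := by
  simp only [a1, etaR_X, qShift_eq, coeff_add, coeff_C_mul_X_pow, coeff_C_mul_X, coeff_X_pow]
  simp

lemma etaR_a2 : etaR a2 = C a2 + 4 * C a1 * X := by
  simp only [a2, etaR_X, qShift_eq, coeff_add, coeff_C_mul_X_pow, coeff_C_mul_X, coeff_X_pow]
  simp

lemma etaR_a3 : etaR a3 = C a3 + 3 * C a2 * X + C a1 * X ^ 2 := by
  simp only [a3, etaR_X, qShift_eq, coeff_add, coeff_C_mul_X_pow, coeff_C_mul_X, coeff_X_pow]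
  simp

lemma etaR_a4 : etaR a4 = C a4 + 2 * C a3 * X + 3 * C a2 * X ^ 2 + 4 * C a1 * X ^ 3 := by
  simp only [a4, etaR_X, qShift_eq, coeff_add, coeff_C_mul_X_pow, coeff_C_mul_X, coeff_X_pow]
  simp

/-- For `f = a_2a_4r + a_2a_3r² + a_2²r³ + 2a_1a_4r² + a_1a_3r³ − a_1a_2r⁴`,
one has `d(f) = a_1²·b`. -/
theorem d2_a2x1 :
    cobarD
        (Polynomial.C (a2 * a4) * Polynomial.X + Polynomial.C (a2 * a3) * Polynomial.X ^ 2 +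
          Polynomial.C (a2 ^ 2) * Polynomial.X ^ 3 +
          2 * Polynomial.C (a1 * a4) * Polynomial.X ^ 2 +
          Polynomial.C (a1 * a3) * Polynomial.X ^ 3 -
          Polynomial.C (a1 * a2) * Polynomial.X ^ 4) =
      Polynomial.C (Polynomial.C (a1 ^ 2)) * bclass := by
  rw [cobarD_eq_map_sub_aeval]
  simp only [Polynomial.map_add, Polynomial.map_sub, Polynomial.map_mul, Polynomial.map_pow,
    Polynomial.map_ofNat, map_C, map_X, aeval_X, aeval_C, Polynomial.algebraMap_apply,
    Algebra.algebraMap_self, RingHom.id_apply, RingHom.coe_coe, map_add, map_sub, map_mul, map_pow,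
    map_ofNat, etaR_a1, etaR_a2, etaR_a3, etaR_a4, bclass]
  grind
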